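/- Let s ≥ 2 be an integer. For every nonnegative integer n, the number of partitions of n into parts not divisible by s equals the number of partitions of n in which no part is repeated more than s − 1 times (i.e., every part has multiplicity at most s − 1). -/

import Mathlib

open PowerSeries Finset

namespace GlaisherAux

noncomputable section

variable {α : Type*}

open scoped Classical

/-- A convenience constructor for the power series whose coefficients indicate a subset. -/
def indicatorSeries (α : Type*) [Semiring α] (s : Set ℕ) : PowerSeries α :=
  PowerSeries.mk fun n => if n ∈ s then 1 else 0

theorem coeff_indicator (s : Set ℕ) [Semiring α] (n : ℕ) :
    coeff (R := α) n (indicatorSeries _ s) = if n ∈ s then 1 else 0 :=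
  coeff_mk _ _

theorem constantCoeff_indicator (s : Set ℕ) [Semiring α] :
    constantCoeff (R := α) (indicatorSeries _ s) = if 0 ∈ s then 1 else 0 :=
  rfl

theorem num_series' [Field α] (i : ℕ) :
    (1 - (X : PowerSeries α) ^ (i + 1))⁻¹ = indicatorSeries α {k | i + 1 ∣ k} := by
  rw [PowerSeries.inv_eq_iff_mul_eq_one]
  · ext n
    cases n with
    | zero => simp [mul_sub, zero_pow, constantCoeff_indicator]
    | succ n =>
      simp only [coeff_one, if_false, mul_sub, mul_one, coeff_indicator,
        LinearMap.map_sub, reduceCtorEq]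
      simp_rw [coeff_mul, coeff_X_pow, coeff_indicator, @boole_mul _ _ _ _]
      simp only [Set.mem_setOf_eq]; erw [sum_ite, sum_ite]
      simp_rw [@filter_filter _ _ _ _ _, sum_const_zero, add_zero, sum_const, nsmul_eq_mul, mul_one,
        sub_eq_iff_eq_add, zero_add]
      symm
      split_ifs with h
      · suffices #{a ∈ antidiagonal (n + 1) | i + 1 ∣ a.fst ∧ a.snd = i + 1} = 1 by
          convert congr_arg ((↑) : ℕ → α) this; norm_cast
        rw [card_eq_one]
        cases' h with p hp
        refine ⟨((i + 1) * (p - 1), i + 1), ?_⟩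
        ext ⟨a₁, a₂⟩
        simp only [mem_filter, Prod.mk_inj, HasAntidiagonal.mem_antidiagonal, mem_singleton]
        constructor
        · rintro ⟨a_left, ⟨a, rfl⟩, rfl⟩
          refine ⟨?_, rfl⟩
          rw [Nat.mul_sub_left_distrib, ← hp, ← a_left, mul_one, Nat.add_sub_cancel]
        · rintro ⟨rfl, rfl⟩
          match p with
          | 0 => rw [mul_zero] at hp; cases hp
          | p + 1 => rw [hp]; simp [mul_add]
      · suffices #{a ∈ antidiagonal (n + 1) | i + 1 ∣ a.fst ∧ a.snd = i + 1} = 0 by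
          convert congr_arg ((↑) : ℕ → α) this; norm_cast
        rw [card_eq_zero]
        apply eq_empty_of_forall_notMem
        simp only [Prod.forall, mem_filter, not_and, HasAntidiagonal.mem_antidiagonal]
        rintro _ h₁ h₂ ⟨a, rfl⟩ rfl
        apply h
        simp [← h₂]
  · simp [zero_pow]

-- The main workhorse (copied from the Archive).
theorem partialGF_prop (α : Type*) [CommSemiring α] (n : ℕ) (s : Finset ℕ) (hs : ∀ i ∈ s, 0 < i)
    (c : ℕ → Set ℕ) (hc : ∀ i, i ∉ s → 0 ∈ c i) :
    #{p : n.Partition | (∀ j, p.parts.count j ∈ c j) ∧ ∀ j ∈ p.parts, j ∈ s} =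
      coeff (R := α) n (∏ i ∈ s, indicatorSeries α ((· * i) '' c i)) := by
  simp_rw [coeff_prod, coeff_indicator, prod_boole, sum_boole]
  apply congr_arg
  simp only [mem_univ, forall_true_left, not_and, not_forall, exists_prop,
    Set.mem_image, not_exists]
  set φ : (a : Nat.Partition n) →
    a ∈ filter (fun p ↦ (∀ (j : ℕ), Multiset.count j p.parts ∈ c j) ∧ ∀ j ∈ p.parts, j ∈ s) univ →
    ℕ →₀ ℕ := fun p _ => {
      toFun := fun i => Multiset.count i p.parts • i
      support := Finset.filter (fun i => i ≠ 0) p.parts.toFinset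
      mem_support_toFun := fun a => by
        simp only [smul_eq_mul, ne_eq, mul_eq_zero, Multiset.count_eq_zero]
        rw [not_or, not_not]
        simp only [Multiset.mem_toFinset, not_not, mem_filter] }
  refine Finset.card_bij φ ?_ ?_ ?_
  · intro a ha
    simp only [φ, not_forall, not_exists, not_and, exists_prop, mem_filter]
    rw [mem_finsuppAntidiag]
    dsimp only [ne_eq, smul_eq_mul, id_eq, eq_mpr_eq_cast, le_eq_subset, Finsupp.coe_mk]
    simp only [mem_univ, forall_true_left, not_and, not_forall, exists_prop,
      mem_filter, true_and] at ha
    refine ⟨⟨?_, fun i ↦ ?_⟩, fun i _ ↦ ⟨a.parts.count i, ha.1 i, rfl⟩⟩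
    · conv_rhs => simp [← a.parts_sum]
      rw [sum_multiset_count_of_subset _ s]
      · simp only [smul_eq_mul]
      · intro i
        simp only [Multiset.mem_toFinset, not_not, mem_filter]
        apply ha.2
    · simp only [ne_eq, Multiset.mem_toFinset, not_not, mem_filter, and_imp]
      exact fun hi _ ↦ ha.2 i hi
  · intro p₁ hp₁ p₂ hp₂ h
    apply Nat.Partition.ext
    simp only [true_and, mem_univ, mem_filter] at hp₁ hp₂
    ext i
    simp only [φ, ne_eq, Multiset.mem_toFinset, not_not, smul_eq_mul, Finsupp.mk.injEq] at h
    by_cases hi : i = 0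
    · rw [hi]
      rw [Multiset.count_eq_zero_of_notMem]
      · rw [Multiset.count_eq_zero_of_notMem]
        intro a; exact Nat.lt_irrefl 0 (hs 0 (hp₂.2 0 a))
      intro a; exact Nat.lt_irrefl 0 (hs 0 (hp₁.2 0 a))
    · rw [← mul_left_inj' hi]
      rw [funext_iff] at h
      exact h.2 i
  · simp only [φ, mem_filter, mem_finsuppAntidiag, mem_univ, exists_prop, true_and, and_assoc]
    rintro f ⟨hf, hf₃, hf₄⟩
    have hf' : f ∈ finsuppAntidiag s n := mem_finsuppAntidiag.mpr ⟨hf, hf₃⟩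
    simp only [mem_finsuppAntidiag] at hf'
    refine ⟨⟨∑ i ∈ s, Multiset.replicate (f i / i) i, ?_, ?_⟩, ?_, ?_, ?_⟩
    · intro i hi
      simp only [exists_prop, Multiset.mem_sum, mem_map, Function.Embedding.coeFn_mk] at hi
      rcases hi with ⟨t, ht, z⟩
      apply hs
      rwa [Multiset.eq_of_mem_replicate z]
    · simp_rw [Multiset.sum_sum, Multiset.sum_replicate, Nat.nsmul_eq_mul]
      rw [← hf'.1]
      refine sum_congr rfl fun i hi => Nat.div_mul_cancel ?_
      rcases hf₄ i hi with ⟨w, _, hw₂⟩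
      rw [← hw₂]
      exact dvd_mul_left _ _
    · intro i
      simp_rw [Multiset.count_sum', Multiset.count_replicate, sum_ite_eq']
      split_ifs with h
      · rcases hf₄ i h with ⟨w, hw₁, hw₂⟩
        rwa [← hw₂, Nat.mul_div_cancel _ (hs i h)]
      · exact hc _ h
    · intro i hi
      rw [Multiset.mem_sum] at hi
      rcases hi with ⟨j, hj₁, hj₂⟩
      rwa [Multiset.eq_of_mem_replicate hj₂]
    · ext i
      simp_rw [Multiset.count_sum', Multiset.count_replicate, sum_ite_eq']
      simp only [ne_eq, Multiset.mem_toFinset, not_not, smul_eq_mul, ite_mul,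
        zero_mul, Finsupp.coe_mk]
      split_ifs with h
      · apply Nat.div_mul_cancel
        rcases hf₄ i h with ⟨w, _, hw₂⟩
        apply Dvd.intro_left _ hw₂
      · apply symm
        rw [← Finsupp.notMem_support_iff]
        exact notMem_mono hf'.2 h

/-- The indicator series of multiples of `j*(i+1)` with `j < s` is a geometric-type sum. -/
theorem geom_indicator [Semiring α] (s i : ℕ) :
    indicatorSeries α ((· * (i + 1)) '' Set.Iio s)
      = ∑ a ∈ range s, (X : PowerSeries α) ^ (a * (i + 1)) := by
  ext n
  rw [coeff_indicator, map_sum]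
  simp_rw [coeff_X_pow]
  by_cases h : ∃ a, a < s ∧ a * (i + 1) = n
  · obtain ⟨a, ha, rfl⟩ := h
    rw [if_pos ⟨a, ha, rfl⟩, Finset.sum_eq_single a]
    · simp
    · intro b _ hb
      rw [if_neg]
      intro hc
      exact hb (Nat.eq_of_mul_eq_mul_right (Nat.succ_pos i) hc.symm)
    · intro hc
      exact absurd (mem_range.2 ha) hc
  · rw [if_neg (by simpa [Set.mem_image] using h), Finset.sum_eq_zero]
    intro b hb
    rw [if_neg]
    rintro rfl
    exact h ⟨b, mem_range.1 hb, rfl⟩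

theorem one_sub_mul_geom [CommRing α] (s i : ℕ) :
    (1 - (X : PowerSeries α) ^ (i + 1)) * ∑ a ∈ range s, (X : PowerSeries α) ^ (a * (i + 1))
      = 1 - (X : PowerSeries α) ^ (s * (i + 1)) := by
  simp_rw [pow_mul']
  linear_combination -(geom_sum_mul ((X : PowerSeries α) ^ (i + 1)) s)

theorem constantCoeff_one_sub_X_pow [CommRing α] (k : ℕ) (hk : 0 < k) :
    constantCoeff (R := α) (1 - X ^ k) = 1 := by
  rw [map_sub, map_pow, constantCoeff_one, constantCoeff_X, zero_pow hk.ne', sub_zero]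

theorem glaisher_gf (s : ℕ) (hs : 2 ≤ s) (q : ℕ) [Field α] :
    (∏ i ∈ (range (s * q)).filter (fun i => ¬ s ∣ (i + 1)),
        (1 - (X : PowerSeries α) ^ (i + 1))⁻¹) *
      ∏ i ∈ range (s * q - q), (1 - (X : PowerSeries α) ^ (s * (q + i + 1))) =
      ∏ i ∈ range (s * q), ∑ a ∈ range s, (X : PowerSeries α) ^ (a * (i + 1)) := by
  have hs0 : 0 < s := by omega
  set m := s * q with hm
  have hqm : q ≤ m := Nat.le_mul_of_pos_left q hs0
  set N : PowerSeries α := ∏ i ∈ (range m).filter (fun i => ¬ s ∣ (i + 1)), (1 - X ^ (i + 1))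
    with hN
  set D : PowerSeries α := ∏ j ∈ range q, (1 - X ^ (s * (j + 1))) with hD
  set G : PowerSeries α := ∏ i ∈ range m, ∑ a ∈ range s, (X : PowerSeries α) ^ (a * (i + 1))
    with hG
  set T : PowerSeries α := ∏ i ∈ range (m - q), (1 - X ^ (s * (q + i + 1))) with hT
  -- the divisible part of range m is the image of range q
  have himg : (range m).filter (fun i => s ∣ (i + 1)) = (range q).image (fun j => s * j + s - 1)
      := by
    ext i
    simp only [mem_filter, mem_range, mem_image]
    constructor
    · rintro ⟨him, k, hk⟩
      have hk1 : 1 ≤ k := by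
        rcases Nat.eq_zero_or_pos k with h | h
        · subst h; simp at hk
        · exact h
      have hkq : k ≤ q := by
        refine Nat.le_of_mul_le_mul_left ?_ hs0
        omega
      have h5 : s * (k - 1) + s = s * k := by
        rw [← Nat.mul_succ]
        congr 1
        omega
      exact ⟨k - 1, by omega, by omega⟩
    · rintro ⟨j, hj, rfl⟩
      have h1 : s * j + s = s * (j + 1) := by ring
      have h2 : s * (j + 1) ≤ s * q := Nat.mul_le_mul_left s (by omega)
      refine ⟨by omega, j + 1, by omega⟩
  have hBD : ∏ i ∈ (range m).filter (fun i => s ∣ (i + 1)), (1 - (X : PowerSeries α) ^ (i + 1))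
      = D := by
    rw [himg, Finset.prod_image]
    · apply Finset.prod_congr rfl
      intro j _
      have h1 : s * j + s - 1 + 1 = s * (j + 1) := by
        have h2 : s * j + s = s * (j + 1) := by ring
        omega
      rw [h1]
    · intro a _ b _ h
      have : s * a = s * b := by dsimp only at h; omega
      exact Nat.eq_of_mul_eq_mul_left hs0 this
  -- step 1 and split
  have key : N * D * G = D * T := by
    have h1 : (∏ i ∈ range m, (1 - (X : PowerSeries α) ^ (i + 1))) * G
        = ∏ i ∈ range m, (1 - (X : PowerSeries α) ^ (s * (i + 1))) := by
      rw [hG, ← Finset.prod_mul_distrib]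
      exact Finset.prod_congr rfl fun i _ => one_sub_mul_geom s i
    have h2 : (∏ i ∈ range m, (1 - (X : PowerSeries α) ^ (i + 1))) = N * D := by
      rw [← Finset.prod_filter_mul_prod_filter_not (range m) (fun i => s ∣ (i + 1))
        (fun i => 1 - (X : PowerSeries α) ^ (i + 1)), hBD, mul_comm]
    have h3 : (∏ i ∈ range m, (1 - (X : PowerSeries α) ^ (s * (i + 1)))) = D * T := by
      rw [hD, hT, ← Finset.prod_range_add (fun i => 1 - (X : PowerSeries α) ^ (s * (i + 1)))
        q (m - q)]
      · congr 2
        omega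
    rw [← h3, ← h1, h2]
  have hDne : (D : PowerSeries α) ≠ 0 := by
    intro h
    have : constantCoeff (R := α) D = 1 := by
      rw [hD, map_prod]
      apply Finset.prod_eq_one
      intro j _
      exact constantCoeff_one_sub_X_pow _ (by positivity)
    rw [h, map_zero] at this
    exact zero_ne_one this
  have key2 : N * G = T := by
    apply mul_left_cancel₀ hDne
    calc D * (N * G) = N * D * G := by ring
      _ = D * T := key
  calc (∏ i ∈ (range m).filter (fun i => ¬ s ∣ (i + 1)), (1 - (X : PowerSeries α) ^ (i + 1))⁻¹)
        * T
      = (∏ i ∈ (range m).filter (fun i => ¬ s ∣ (i + 1)), (1 - (X : PowerSeries α) ^ (i + 1))⁻¹)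
        * (N * G) := by rw [key2]
    _ = ((∏ i ∈ (range m).filter (fun i => ¬ s ∣ (i + 1)),
          (1 - (X : PowerSeries α) ^ (i + 1))⁻¹) * N) * G := by ring
    _ = 1 * G := by
        congr 1
        rw [hN, ← Finset.prod_mul_distrib]
        apply Finset.prod_eq_one
        intro i _
        rw [mul_comm]
        apply PowerSeries.mul_inv_cancel
        rw [constantCoeff_one_sub_X_pow (α := α) (i + 1) (by omega)]
        exact one_ne_zero
    _ = G := one_mul G

end

end GlaisherAux

open GlaisherAux Finset PowerSeries Classical in
/-- Glaisher's partition identity: the number of partitions of `n` into parts not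
divisible by `s` equals the number of partitions of `n` in which no part is repeated
more than `s - 1` times. -/
theorem glaisher (s : ℕ) (hs : 2 ≤ s) (n : ℕ) :
    Nat.card {p : Nat.Partition n // ∀ i ∈ p.parts, ¬ s ∣ i} =
    Nat.card {p : Nat.Partition n // ∀ i ∈ p.parts, p.parts.count i ≤ s - 1} := by
  have hs0 : 0 < s := by omega
  set q : ℕ := n + 1 with hq
  set m : ℕ := s * q with hm
  have hnm : n < m := by
    have : 1 * q ≤ s * q := Nat.mul_le_mul_right q (by omega)
    omega
  -- part bound: every part of a partition of n is ≤ n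
  have hpart : ∀ (p : Nat.Partition n) (i : ℕ), i ∈ p.parts → 0 < i ∧ i ≤ n := fun p i hi =>
    ⟨p.parts_pos hi, by
      simpa [p.parts_sum] using Multiset.single_le_sum (fun _ _ => Nat.zero_le _) _ hi⟩
  -- the finset of allowed parts for the "not divisible" side
  set S : Finset ℕ := (range m).filter (fun i => ¬ s ∣ (i + 1)) with hS
  have card1 : (Nat.card {p : Nat.Partition n // ∀ i ∈ p.parts, ¬ s ∣ i} : ℚ) =
      coeff (R := ℚ) n (∏ i ∈ S.map ⟨Nat.succ, Nat.succ_injective⟩, indicatorSeries ℚ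
        ((· * i) '' Set.univ)) := by
    rw [← partialGF_prop ℚ n _ (by simp) (fun _ => Set.univ) (fun _ _ => trivial)]
    rw [Nat.card_eq_fintype_card, Fintype.card_subtype]
    norm_cast
    congr 1
    apply Finset.filter_congr
    intro p _
    simp only [Set.mem_univ, forall_const, true_and]
    constructor
    · intro h j hj
      simp only [mem_map, hS, mem_filter, mem_range, Function.Embedding.coeFn_mk]
      obtain ⟨hj0, hjn⟩ := hpart p j hj
      exact ⟨j - 1, ⟨by omega, by rw [Nat.sub_add_cancel hj0]; exact h j hj⟩, by omega⟩
    · intro h j hj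
      obtain ⟨i, hi, rfl⟩ := mem_map.1 (h j hj)
      rw [hS, mem_filter] at hi
      simpa using hi.2
  have card2 : (Nat.card {p : Nat.Partition n // ∀ i ∈ p.parts, p.parts.count i ≤ s - 1} : ℚ) =
      coeff (R := ℚ) n (∏ i ∈ (range m).map ⟨Nat.succ, Nat.succ_injective⟩, indicatorSeries ℚ
        ((· * i) '' Set.Iio s)) := by
    rw [← partialGF_prop ℚ n _ (by simp) (fun _ => Set.Iio s) (fun _ _ => by simpa using hs0)]
    rw [Nat.card_eq_fintype_card, Fintype.card_subtype]
    norm_cast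
    congr 1
    apply Finset.filter_congr
    intro p _
    constructor
    · intro h
      constructor
      · intro j
        simp only [Set.mem_Iio]
        by_cases hj : j ∈ p.parts
        · have := h j hj; omega
        · rw [Multiset.count_eq_zero_of_notMem hj]; omega
      · intro j hj
        obtain ⟨hj0, hjn⟩ := hpart p j hj
        simp only [mem_map, mem_range, Function.Embedding.coeFn_mk]
        exact ⟨j - 1, by omega, by omega⟩
    · rintro ⟨h1, _⟩ i hi
      have := h1 i
      simp only [Set.mem_Iio] at this
      omega
  -- rewrite the two products into the power series of glaisher_gf
  have prod1 : (∏ i ∈ S.map ⟨Nat.succ, Nat.succ_injective⟩,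
      indicatorSeries ℚ ((· * i) '' Set.univ)) =
      ∏ i ∈ S, (1 - (X : PowerSeries ℚ) ^ (i + 1))⁻¹ := by
    rw [Finset.prod_map]
    simp only [Function.Embedding.coeFn_mk, Nat.succ_eq_add_one]
    apply Finset.prod_congr rfl
    intro i _
    rw [num_series']
    have hset : ((· * (i + 1)) '' (Set.univ : Set ℕ)) = {k | i + 1 ∣ k} := by
      ext k
      simp only [Set.mem_image, Set.mem_univ, true_and, Set.mem_setOf_eq, Nat.succ_eq_add_one]
      constructor
      · rintro ⟨c, rfl⟩; exact Dvd.intro_left c rfl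
      · rintro ⟨c, rfl⟩; exact ⟨c, mul_comm _ _⟩
    rw [hset]
  have prod2 : (∏ i ∈ (range m).map ⟨Nat.succ, Nat.succ_injective⟩,
      indicatorSeries ℚ ((· * i) '' Set.Iio s)) =
      ∏ i ∈ range m, ∑ a ∈ range s, (X : PowerSeries ℚ) ^ (a * (i + 1)) := by
    rw [Finset.prod_map]
    simp only [Function.Embedding.coeFn_mk, Nat.succ_eq_add_one]
    exact Finset.prod_congr rfl fun i _ => geom_indicator s i
  suffices h : (Nat.card {p : Nat.Partition n // ∀ i ∈ p.parts, ¬ s ∣ i} : ℚ) =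
      (Nat.card {p : Nat.Partition n // ∀ i ∈ p.parts, p.parts.count i ≤ s - 1} : ℚ) by
    exact_mod_cast h
  rw [card1, card2, prod1, prod2, ← glaisher_gf s hs q,
    coeff_mul_prod_one_sub_of_lt_order]
  intro i _
  rw [order_X_pow]
  have h1 : q ≤ s * (q + i + 1) := by
    have : 1 * q ≤ s * (q + i + 1) := Nat.mul_le_mul (by omega) (by omega)
    omega
  exact_mod_cast by omega
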